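/- For n > 1, the b-chromatic number of the total graph of the star S_n equals n + 1. -/

import Mathlib

open SimpleGraph

/-- The star graph with a central vertex `0` and `n` leaves. -/
def starGraph (n : ℕ) : SimpleGraph (Fin (n+1)) where
  Adj u v := u ≠ v ∧ (u = 0 ∨ v = 0)
  symm := by
    refine ⟨?_⟩
    intro u v h
    exact ⟨h.1.symm, h.2.symm⟩
  loopless := by
    refine ⟨?_⟩
    intro u h
    exact h.1 rfl

/-- A proper coloring with `k` colors which is a b-coloring: every color class
contains a vertex adjacent to at least one vertex of every other color class. -/
def IsBColoring {V : Type*} (G : SimpleGraph V) (k : ℕ) (c : V → Fin k) : Prop :=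
  (∀ u v, G.Adj u v → c u ≠ c v) ∧
    ∀ i : Fin k, ∃ v, c v = i ∧ ∀ j : Fin k, j ≠ i → ∃ u, G.Adj v u ∧ c u = j

/-- `G` admits a b-coloring with `k` colors. -/
def HasBColoring {V : Type*} (G : SimpleGraph V) (k : ℕ) : Prop :=
  ∃ c : V → Fin k, IsBColoring G k c

/-- The set of `k` such that `G` has a b-coloring with `k` colors.  The
b-chromatic number of `G` is the greatest element of this set. -/
def bChromaticSet {V : Type*} (G : SimpleGraph V) : Set ℕ :=
  {k | HasBColoring G k}

/-- The set of `i` such that `G` has at least `i` vertices of degree at least `i - 1`.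
The m-degree of `G` is the greatest element of this set. -/
def mDegreeSet {V : Type*} (G : SimpleGraph V) : Set ℕ :=
  {i | ∃ S : Set V, S.Finite ∧ S.ncard = i ∧ ∀ v ∈ S, i - 1 ≤ (G.neighborSet v).ncard}

/-- The line graph of `G`: vertices are the edges of `G`, two being adjacent iff
they are distinct and share an endpoint. -/
def lineGraph {V : Type*} (G : SimpleGraph V) : SimpleGraph G.edgeSet where
  Adj e f := e ≠ f ∧ ∃ v, v ∈ (e : Sym2 V) ∧ v ∈ (f : Sym2 V)
  symm := by
    refine ⟨?_⟩
    rintro e f ⟨hne, v, hv1, hv2⟩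
    exact ⟨hne.symm, v, hv2, hv1⟩
  loopless := by
    refine ⟨?_⟩
    rintro e ⟨hne, -⟩
    exact hne rfl

/-- The total graph of `G`: vertices are `V(G) ⊕ E(G)`; adjacency is vertex
adjacency, vertex-edge incidence, or edge adjacency. -/
def totalGraph {V : Type*} (G : SimpleGraph V) : SimpleGraph (V ⊕ G.edgeSet) where
  Adj x y :=
    match x, y with
    | .inl u, .inl v => G.Adj u v
    | .inl u, .inr e => u ∈ (e : Sym2 V)
    | .inr e, .inl u => u ∈ (e : Sym2 V)
    | .inr e, .inr f => e ≠ f ∧ ∃ v, v ∈ (e : Sym2 V) ∧ v ∈ (f : Sym2 V)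
  symm := by
    refine ⟨?_⟩
    rintro (u | e) (v | f) h
    · exact h.symm
    · exact h
    · exact h
    · exact ⟨h.1.symm, h.2.choose, h.2.choose_spec.2, h.2.choose_spec.1⟩
  loopless := by
    refine ⟨?_⟩
    rintro (u | e) h
    · exact G.loopless.irrefl u h
    · exact h.1 rfl

/-- The `p`-th power of `G`: same vertices, `u ~ v` iff `0 < d(u,v) ≤ p`. -/
def graphPower {V : Type*} (G : SimpleGraph V) (p : ℕ) : SimpleGraph V where
  Adj u v := 0 < G.dist u v ∧ G.dist u v ≤ p
  symm := by
    refine ⟨?_⟩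
    intro u v h
    rwa [SimpleGraph.dist_comm]
  loopless := by
    refine ⟨?_⟩
    intro u h
    simp [SimpleGraph.dist_self] at h

/-! Give the centre of the star colour `0`, the edge `s(0, b)` colour `b`, and each leaf a colour
other than `0` and that of its edge. The centre and the edges then dominate all `n + 1` colours.
Conversely, the dominating vertices of a b-colouring with `k` colours are `k` distinct vertices of
degree at least `k - 1`. In the total graph of the star the leaves have degree `2`, so for `k ≥ 4`
these vertices are among the centre and the `n` edges, and `k ≤ n + 1`. -/

theorem HasBColoring.mem_mDegreeSet {V : Type*} [Finite V] {G : SimpleGraph V} {k : ℕ}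
    (h : HasBColoring G k) : k ∈ mDegreeSet G := by
  obtain ⟨c, -, hdom⟩ := h
  choose v hv hnbr using hdom
  have hv_inj : Function.Injective v := fun i j hij => by rw [← hv i, hij, hv j]
  refine ⟨Set.range v, Set.toFinite _, ?_, ?_⟩
  · rw [← Set.image_univ, Set.ncard_image_of_injective _ hv_inj, Set.ncard_univ, Nat.card_fin]
  · rintro _ ⟨i, rfl⟩
    choose u hadj hu using hnbr i
    let w : {j // j ≠ i} → G.neighborSet (v i) := fun j => ⟨u j j.2, hadj j j.2⟩
    have hw : Function.Injective w := fun j j' hjj' => Subtype.ext <| by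
      rw [← hu j j.2, ← hu j' j'.2]
      exact congrArg (c ∘ Subtype.val) hjj'
    calc k - 1 = Nat.card {j : Fin k // j ≠ i} := by simp [Fintype.card_subtype_compl]
      _ ≤ Nat.card (G.neighborSet (v i)) := Nat.card_le_card_of_injective w hw
      _ = (G.neighborSet (v i)).ncard := Nat.card_coe_set_eq _

namespace StarGraph

variable {n : ℕ}

/-- On an edge `s(0, b)` of the star this is its leaf `b`. -/
def endpointSum : Sym2 (Fin (n + 1)) → Fin (n + 1) :=
  Sym2.lift ⟨(· + ·), add_comm⟩

@[simp]
theorem endpointSum_mk (a b : Fin (n + 1)) : endpointSum s(a, b) = a + b := rfl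

theorem eq_mk_endpointSum {e : Sym2 (Fin (n + 1))} (he : e ∈ (_root_.starGraph n).edgeSet) :
    endpointSum e ≠ 0 ∧ e = s(0, endpointSum e) := by
  induction e using Sym2.ind with
  | _ u v =>
    obtain ⟨hne, rfl | rfl⟩ := he
    · simpa using hne.symm
    · simpa [Sym2.eq_swap] using hne

theorem mk_zero_mem_edgeSet {b : Fin (n + 1)} (hb : b ≠ 0) :
    s(0, b) ∈ (_root_.starGraph n).edgeSet :=
  ⟨hb.symm, Or.inl rfl⟩

def edge (b : Fin (n + 1)) (hb : b ≠ 0) : (_root_.starGraph n).edgeSet :=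
  ⟨s(0, b), mk_zero_mem_edgeSet hb⟩

@[simp]
theorem endpointSum_edge (b : Fin (n + 1)) (hb : b ≠ 0) : endpointSum (edge b hb).1 = b := by
  simp [edge]

theorem endpointSum_injective :
    Function.Injective fun e : (_root_.starGraph n).edgeSet => endpointSum e.1 :=
  fun e f h => Subtype.ext <| by
    rw [(eq_mk_endpointSum e.2).2, (eq_mk_endpointSum f.2).2]
    exact congrArg _ h

theorem neighborSet_totalGraph_inl_subset {a : Fin (n + 1)} (ha : a ≠ 0) :
    (totalGraph (_root_.starGraph n)).neighborSet (.inl a) ⊆ {.inl 0, .inr (edge a ha)} := by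
  rintro (b | e) hadj
  · obtain ⟨-, h | rfl⟩ := hadj
    · exact absurd h ha
    · simp
  · obtain ⟨-, hrep⟩ := eq_mk_endpointSum e.2
    have hmem : a ∈ e.1 := hadj
    rw [hrep, Sym2.mem_iff] at hmem
    obtain h | rfl := hmem
    · exact absurd h ha
    · simp [edge, ← hrep]

theorem ncard_neighborSet_totalGraph_inl_le {a : Fin (n + 1)} (ha : a ≠ 0) :
    ((totalGraph (_root_.starGraph n)).neighborSet (.inl a)).ncard ≤ 2 :=
  (Set.ncard_le_ncard (neighborSet_totalGraph_inl_subset ha)).trans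
    ((Set.ncard_insert_le _ _).trans (by simp))

def toVertex : Fin (n + 1) ⊕ (_root_.starGraph n).edgeSet → Fin (n + 1) :=
  Sum.elim id fun e => endpointSum e.1

theorem injOn_toVertex :
    Set.InjOn toVertex {x | 3 ≤ ((totalGraph (_root_.starGraph n)).neighborSet x).ncard} := by
  have center :
      ∀ a, 3 ≤ ((totalGraph (_root_.starGraph n)).neighborSet (.inl a)).ncard → a = 0 :=
    fun a h => by_contra fun ha => by have := ncard_neighborSet_totalGraph_inl_le ha; omega
  rintro (a | e) ha (b | f) hb h
  · exact congrArg _ h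
  · exact absurd ((h : a = _).symm.trans (center a ha)) (eq_mk_endpointSum f.2).1
  · exact absurd ((h : _ = b).trans (center b hb)) (eq_mk_endpointSum e.2).1
  · exact congrArg _ (endpointSum_injective h)

theorem le_of_mem_mDegreeSet_totalGraph {i : ℕ}
    (hi : i ∈ mDegreeSet (totalGraph (_root_.starGraph n))) (h3 : 3 < i) : i ≤ n + 1 := by
  obtain ⟨S, -, rfl, hS⟩ := hi
  calc S.ncard ≤ (Set.univ : Set (Fin (n + 1))).ncard :=
        Set.ncard_le_ncard_of_injOn toVertex (fun _ _ => trivial)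
          (injOn_toVertex.mono fun x hx => (by have := hS x hx; show 3 ≤ _; omega))
          Set.finite_univ
    _ = n + 1 := by simp

def leafColor (a : Fin (n + 1)) : Fin (n + 1) := if a = 1 then 2 else 1

theorem leafColor_ne_zero_and_ne_self (hn : 1 < n) (a : Fin (n + 1)) :
    leafColor a ≠ 0 ∧ leafColor a ≠ a := by
  have h1 : ((1 : Fin (n + 1)) : ℕ) = 1 := Nat.mod_eq_of_lt (show 1 < n + 1 by omega)
  have h2 : ((2 : Fin (n + 1)) : ℕ) = 2 := Nat.mod_eq_of_lt (show 2 < n + 1 by omega)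
  unfold leafColor
  split_ifs with ha
  · simp only [ha, Ne, Fin.ext_iff, h1, h2, Fin.val_zero]; omega
  · exact ⟨by simp only [Ne, Fin.ext_iff, h1, Fin.val_zero]; omega, Ne.symm ha⟩

def totalColoring : Fin (n + 1) ⊕ (_root_.starGraph n).edgeSet → Fin (n + 1) :=
  Sum.elim (fun a => if a = 0 then 0 else leafColor a) fun e => endpointSum e.1

theorem totalColoring_inl_ne_inr (hn : 1 < n) {a : Fin (n + 1)}
    {e : (_root_.starGraph n).edgeSet} (ha : a ∈ e.1) :
    totalColoring (.inl a) ≠ totalColoring (.inr e) := by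
  obtain ⟨he, hrep⟩ := eq_mk_endpointSum e.2
  rw [hrep, Sym2.mem_iff] at ha
  obtain rfl | rfl := ha
  · simpa [totalColoring] using he.symm
  · simpa [totalColoring, he] using (leafColor_ne_zero_and_ne_self hn _).2

theorem totalColoring_proper (hn : 1 < n) (x y : Fin (n + 1) ⊕ (_root_.starGraph n).edgeSet)
    (hxy : (totalGraph (_root_.starGraph n)).Adj x y) : totalColoring x ≠ totalColoring y := by
  rcases x with a | e <;> rcases y with b | f
  · obtain ⟨hne, rfl | rfl⟩ := hxy
    · simpa [totalColoring, Ne.symm hne] using ((leafColor_ne_zero_and_ne_self hn b).1).symm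
    · simpa [totalColoring, hne] using (leafColor_ne_zero_and_ne_self hn a).1
  · exact totalColoring_inl_ne_inr hn hxy
  · exact (totalColoring_inl_ne_inr hn hxy).symm
  · exact endpointSum_injective.ne hxy.1

theorem totalColoring_dominating (i : Fin (n + 1)) :
    ∃ x, totalColoring x = i ∧ ∀ j, j ≠ i →
      ∃ y, (totalGraph (_root_.starGraph n)).Adj x y ∧ totalColoring y = j := by
  have center_mem_edge (b : Fin (n + 1)) (hb : b ≠ 0) : (0 : Fin (n + 1)) ∈ (edge b hb).1 :=
    Sym2.mem_mk_left 0 b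
  by_cases hi : i = 0
  · subst hi
    exact ⟨.inl 0, by simp [totalColoring], fun j hj =>
      ⟨.inr (edge j hj), center_mem_edge j hj, by simp [totalColoring]⟩⟩
  refine ⟨.inr (edge i hi), by simp [totalColoring], fun j hj => ?_⟩
  by_cases hj0 : j = 0
  · exact ⟨.inl 0, center_mem_edge i hi, by simp [totalColoring, hj0]⟩
  · have hne : edge i hi ≠ edge j hj0 := fun h =>
      hj (by simpa using congrArg (endpointSum ·.1) h.symm)
    exact ⟨.inr (edge j hj0), ⟨hne, 0, center_mem_edge i hi, center_mem_edge j hj0⟩,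
      by simp [totalColoring]⟩

theorem isBColoring_totalColoring (hn : 1 < n) :
    IsBColoring (totalGraph (_root_.starGraph n)) (n + 1) totalColoring :=
  ⟨totalColoring_proper hn, totalColoring_dominating⟩

end StarGraph

open StarGraph in
theorem totalGraph_star_bChromatic (n : ℕ) (hn : 1 < n) :
    IsGreatest (bChromaticSet (totalGraph (_root_.starGraph n))) (n + 1) := by
  refine ⟨⟨totalColoring, isBColoring_totalColoring hn⟩, fun k hk => ?_⟩
  by_contra! hlt
  have := le_of_mem_mDegreeSet_totalGraph (HasBColoring.mem_mDegreeSet hk) (by omega)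
  omega
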